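/- arXiv:2605.13319 — 2 statements merged into one kernel-verified Lean document; each statement's English description precedes it below -/
import Mathlib

section
/- For the pipeline scheduling model with communication startup overhead α ≥ 0, per-token transmission time β ≥ 0, and per-token generation time γ ≥ 0, define for each batching strategy (a partition of tokens 1..N into consecutive batches) the completion time as follows: batch k of tokens is generated sequentially (each token taking time γ), the communication of a batch takes time α + β·(batch size), communication of a batch can start only after its generation finishes and the previous batch's communication finishes. Then the minimal completion time OPT(j) over all batchings of the first j tokens satisfies the recurrence OPT(0) = 0 and OPT(j) = min over 0 ≤ i < j of [max(OPT(i), γ·j) + α + β·(j − i)] for j ≥ 1. -/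
/-- Pipeline fold step: state is (tokens generated so far, communication finish time).
Generating a batch of size `b` finishes at time `γ * (tokens so far + b)`; its
communication starts at the max of the previous communication finish and that
generation finish, and takes `α + β * b`. -/
def pipeStep (α β γ : ℝ) (s : ℕ × ℝ) (b : ℕ) : ℕ × ℝ :=
  (s.1 + b, max s.2 (γ * ((s.1 + b : ℕ) : ℝ)) + α + β * (b : ℝ))

/-- Completion time of a batching strategy given by its list of batch sizes. -/
def complTime (α β γ : ℝ) (l : List ℕ) : ℝ :=
  (l.foldl (pipeStep α β γ) (0, 0)).2

/-- A list of batch sizes is a batching of the first `N` tokens: all batches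
nonempty and sizes summing to `N`. -/
def IsBatching (l : List ℕ) (N : ℕ) : Prop :=
  (∀ b ∈ l, 0 < b) ∧ l.sum = N

/-- The set of completion times achievable by batchings of the first `N` tokens. -/
def Times (α β γ : ℝ) (N : ℕ) : Set ℝ :=
  {t : ℝ | ∃ l : List ℕ, IsBatching l N ∧ t = complTime α β γ l}

lemma pipe_fst (α β γ : ℝ) : ∀ (l : List ℕ) (s : ℕ × ℝ),
    (l.foldl (pipeStep α β γ) s).1 = s.1 + l.sum := by
  intro l
  induction l with
  | nil => simp
  | cons a t ih => intro s; simp [List.foldl_cons, ih, pipeStep]; omega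

lemma compl_concat (α β γ : ℝ) (l : List ℕ) (b : ℕ) :
    complTime α β γ (l ++ [b]) =
      max (complTime α β γ l) (γ * ((l.sum + b : ℕ) : ℝ)) + α + β * b := by
  simp [complTime, List.foldl_append, pipeStep, pipe_fst]

/-- the minimal completion time over batchings satisfies the DP recurrence. -/
theorem opt_satisfies_recurrence (α β γ : ℝ) (hα : 0 ≤ α) (hβ : 0 ≤ β) (hγ : 0 ≤ γ)
    (OPT : ℕ → ℝ) (hOPT : ∀ j : ℕ, IsLeast (Times α β γ j) (OPT j)) :
    OPT 0 = 0 ∧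
    ∀ j : ℕ, ∀ hj : 1 ≤ j,
      OPT j = (Finset.range j).inf' (Finset.nonempty_range_iff.mpr (by omega))
        (fun i => max (OPT i) (γ * (j : ℝ)) + α + β * ((j : ℝ) - (i : ℝ))) := by
  constructor
  · obtain ⟨l, ⟨hpos, hsum⟩, heq⟩ := (hOPT 0).1
    have hl : l = [] := by
      cases l with
      | nil => rfl
      | cons a t =>
        have := hpos a (by simp)
        simp [List.sum_cons] at hsum
        omega
    subst hl
    simpa [complTime] using heq
  · intro j hj
    apply le_antisymm
    · apply Finset.le_inf'
      intro i hi
      rw [Finset.mem_range] at hi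
      obtain ⟨l, ⟨hpos, hsum⟩, heq⟩ := (hOPT i).1
      have hmem : max (OPT i) (γ * (j : ℝ)) + α + β * ((j : ℝ) - (i : ℝ)) ∈ Times α β γ j := by
        refine ⟨l ++ [j - i], ⟨?_, ?_⟩, ?_⟩
        · intro b hb
          rcases List.mem_append.mp hb with h | h
          · exact hpos b h
          · simp at h; omega
        · simp [hsum]; omega
        · rw [compl_concat, hsum, ← heq]
          have h1 : ((i + (j - i) : ℕ) : ℝ) = (j : ℝ) := by
            have : i + (j - i) = j := by omega
            rw [this]
          have h2 : ((j - i : ℕ) : ℝ) = (j : ℝ) - (i : ℝ) := by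
            push_cast [Nat.cast_sub (le_of_lt hi)]; ring
          rw [h1, h2]
      exact (hOPT j).2 hmem
    · obtain ⟨l, ⟨hpos, hsum⟩, heq⟩ := (hOPT j).1
      rcases List.eq_nil_or_concat l with rfl | ⟨L, b, rfl⟩
      · simp at hsum; omega
      · have hb : 0 < b := hpos b (by simp)
        have hLsum : L.sum + b = j := by simpa using hsum
        have hiop : L.sum < j := by omega
        have hOi : OPT L.sum ≤ complTime α β γ L :=
          (hOPT L.sum).2 ⟨L, ⟨fun x hx => hpos x (by simp [hx]), rfl⟩, rfl⟩
        calc (Finset.range j).inf' _ _ ≤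
            max (OPT L.sum) (γ * (j : ℝ)) + α + β * ((j : ℝ) - (L.sum : ℝ)) :=
              Finset.inf'_le _ (Finset.mem_range.mpr hiop)
          _ ≤ OPT j := by
              rw [heq, List.concat_eq_append, compl_concat]
              have h1 : ((L.sum + b : ℕ) : ℝ) = (j : ℝ) := by rw [hLsum]
              have h2 : (b : ℝ) = (j : ℝ) - (L.sum : ℝ) := by
                have : (j : ℝ) = (L.sum : ℝ) + (b : ℝ) := by exact_mod_cast hLsum.symm
                linarith
              rw [h1, h2]
              gcongr
end

section
/- Under the pipeline scheduling model, the completion time of any batching strategy B_1,...,B_K admits the closed form T = max over 1 ≤ k ≤ K of [ γ·e_k + Σ_{j=k}^{K} (α + β·|B_j|) ], where e_k denotes the index of the last token of batch B_k. -/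
theorem Finset.sup'_range_add_one {α : Type*} [SemilatticeSup α] (f : ℕ → α) {n : ℕ}
    (hn : (Finset.range n).Nonempty) :
    (Finset.range (n + 1)).sup' Finset.nonempty_range_add_one f =
      (Finset.range n).sup' hn f ⊔ f n := by
  rw [Finset.sup'_congr _ Finset.range_add_one fun _ _ => rfl, Finset.sup'_insert, sup_comm]

section Pipeline

variable (α β γ : ℝ)

theorem foldl_pipeStep_fst (l : List ℕ) (s : ℕ × ℝ) :
    (l.foldl (pipeStep α β γ) s).1 = s.1 + l.sum := by
  induction l generalizing s with
  | nil => simp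
  | cons b l ih => simp [ih, pipeStep, add_assoc]

theorem complTime_nil : complTime α β γ [] = 0 := rfl

theorem complTime_append_singleton (l : List ℕ) (b : ℕ) :
    complTime α β γ (l ++ [b]) =
      max (complTime α β γ l) (γ * ((l ++ [b]).sum : ℝ)) + (α + β * b) := by
  simp [complTime, List.foldl_append, pipeStep, foldl_pipeStep_fst, add_assoc]

theorem complTime_singleton (hγ : 0 ≤ γ) (b : ℕ) :
    complTime α β γ [b] = γ * b + (α + β * b) := by
  simpa [complTime_nil, max_eq_right (by positivity : 0 ≤ γ * b)] using
    complTime_append_singleton α β γ [] b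

/-- The finish time when batch `k` (0-based) starts communicating as soon as it is generated and
all later batches follow back to back. -/
def chainTime (l : List ℕ) (k : ℕ) : ℝ :=
  γ * (((l.take (k + 1)).sum : ℕ) : ℝ) + ((l.drop k).map (fun s => α + β * (s : ℝ))).sum

theorem chainTime_append_singleton_of_lt {l : List ℕ} {k : ℕ} (hk : k < l.length) (b : ℕ) :
    chainTime α β γ (l ++ [b]) k = chainTime α β γ l k + (α + β * b) := by
  simp [chainTime, List.take_append_of_le_length hk, List.drop_append_of_le_length hk.le, add_assoc]

theorem chainTime_append_singleton_length (l : List ℕ) (b : ℕ) :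
    chainTime α β γ (l ++ [b]) l.length = γ * ((l ++ [b]).sum : ℝ) + (α + β * b) := by
  simp [chainTime]

end Pipeline

/-- closed form for the completion time of any batching strategy. -/
theorem complTime_closed_form (α β γ : ℝ) (hγ : 0 ≤ γ)
    (l : List ℕ) (hl : l ≠ []) :
    complTime α β γ l =
      (Finset.range l.length).sup' (Finset.nonempty_range_iff.mpr (by simpa using hl))
        (fun k => γ * (((l.take (k + 1)).sum : ℕ) : ℝ)
          + ((l.drop k).map (fun s => α + β * (s : ℝ))).sum) := by
  show complTime α β γ l = (Finset.range l.length).sup' _ (chainTime α β γ l)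
  induction l using List.reverseRecOn with
  | nil => contradiction
  | append_singleton l b ih =>
    rcases eq_or_ne l [] with rfl | hl'
    · simp [complTime_singleton α β γ hγ, chainTime]
    · have hlen : (Finset.range l.length).Nonempty := by simpa using hl'
      simp only [List.length_append, List.length_singleton]
      rw [Finset.sup'_range_add_one _ hlen, complTime_append_singleton, ih hl',
        chainTime_append_singleton_length, Finset.sup'_congr hlen rfl fun k hk =>
          chainTime_append_singleton_of_lt α β γ (Finset.mem_range.mp hk) b,
        ← Finset.sup'_add, max_add_add_right]
end
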